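/- Let A be a commutative Q-algebra, p an element of A, c a natural number, and P_0, ..., P_r polynomials in A[X]. Define the A-linear operator D_p on A[[q]] by D_p F = q*(dF/dq) + p*F. Suppose the sequence (a_n) in A satisfies sum_{d=0}^{r} q^d * P_d(D_p)( sum_n a_n q^n ) = 0 in A[[q]]. Then sum_{d=0}^{r} q^d * P_d(D_p)( prod_{m=1}^{d} (D_p + m)^c ( sum_n ( prod_{m=1}^{n} (p+m)^c ) * a_n * q^n ) ) = 0. (This is the general principle, valid when rank A^1(E) = 1, by which the hyperplane twist H_d = prod_{m=1}^{d}(p+m)^c of a cohomology-valued series transforms its differential equation into the same form with the extra factors prod_{m=1}^{d}(D+m)^c.) -/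

import Mathlib

open PowerSeries

/-!
`D_p` acts diagonally on monomials, `D_p qⁿ = (p + n) qⁿ`, so `P(D_p)` and
`∏_{m=1}^{d} (D_p + m)^c` multiply the `n`-th coefficient by `P(p + n)` and
`∏_{m=1}^{d} (p + n + m)^c`, while `q^d` shifts coefficients by `d`. Since
`H_{n+d} = H_n ∏_{m=1}^{d} (p + n + m)^c` for `H_n = ∏_{m=1}^{n} (p + m)^c`, the twist
`Σ Fₙ qⁿ ↦ Σ Hₙ Fₙ qⁿ` intertwines `q^d P(D_p)` with `q^d P(D_p) ∏_{m=1}^{d} (D_p + m)^c`;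
being linear, it sends the vanishing sum for `Σ aₙ qⁿ` to the vanishing sum for its twist.
-/

/-- The `A`-linear operator `D_p F = q * dF/dq + p * F` on `A[[q]]`. -/
noncomputable def Dp {A : Type*} [CommRing A] [Algebra ℚ A] (p : A) (F : A⟦X⟧) : A⟦X⟧ :=
  X * derivative A F + PowerSeries.C p * F

/-- Substitution of an operator `E` on `A[[q]]` into a polynomial `P ∈ A[X]`:
`P(E) = Σ cₙ Eⁿ`, the coefficients acting by multiplication. -/
noncomputable def applyPoly {A : Type*} [CommRing A] [Algebra ℚ A] (P : Polynomial A)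
    (E : A⟦X⟧ → A⟦X⟧) (F : A⟦X⟧) : A⟦X⟧ :=
  P.sum fun n cn => PowerSeries.C cn * E^[n] F

/-- The hyperplane-twist operator `∏_{m=1}^{d} (D_p + m)^c` on `A[[q]]`
(the empty product `d = 0` being the identity). -/
noncomputable def twistOp {A : Type*} [CommRing A] [Algebra ℚ A] (p : A) (c : ℕ) :
    ℕ → A⟦X⟧ → A⟦X⟧
  | 0 => id
  | d + 1 => fun F => (fun G => Dp p G + (d + 1) • G)^[c] (twistOp p c d F)

section DiagonalOperators

variable {A : Type*} [CommRing A]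

theorem coeff_iterate_of_coeff_eq_mul {E : A⟦X⟧ → A⟦X⟧} {μ : ℕ → A}
    (hE : ∀ F n, coeff n (E F) = μ n * coeff n F) (k : ℕ) (F : A⟦X⟧) (n : ℕ) :
    coeff n (E^[k] F) = μ n ^ k * coeff n F := by
  induction k with
  | zero => simp
  | succ k ih => rw [Function.iterate_succ_apply', hE, ih, pow_succ', mul_assoc]

variable [Algebra ℚ A]

theorem coeff_applyPoly_of_coeff_eq_mul {E : A⟦X⟧ → A⟦X⟧} {μ : ℕ → A}
    (hE : ∀ F n, coeff n (E F) = μ n * coeff n F) (P : Polynomial A) (F : A⟦X⟧) (n : ℕ) :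
    coeff n (applyPoly P E F) = P.eval (μ n) * coeff n F := by
  rw [applyPoly, Polynomial.sum_def, map_sum, Polynomial.eval_eq_sum, Polynomial.sum_def,
    Finset.sum_mul]
  refine Finset.sum_congr rfl fun k _ => ?_
  rw [coeff_C_mul, coeff_iterate_of_coeff_eq_mul hE, mul_assoc]

theorem coeff_Dp (p : A) (F : A⟦X⟧) (n : ℕ) :
    coeff n (Dp p F) = (p + n) * coeff n F := by
  rw [Dp, map_add, coeff_C_mul]
  cases n with
  | zero => simp
  | succ k =>
    rw [coeff_succ_X_mul, coeff_derivative]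
    push_cast
    ring

theorem coeff_twistOp (p : A) (c d : ℕ) (F : A⟦X⟧) (n : ℕ) :
    coeff n (twistOp p c d F) = (∏ m ∈ Finset.Icc 1 d, (p + ↑(n + m)) ^ c) * coeff n F := by
  induction d with
  | zero => simp [twistOp]
  | succ d ih =>
    have hshift : ∀ G n,
        coeff n (Dp p G + (d + 1) • G) = (p + ↑(n + (d + 1))) * coeff n G := by
      intro G n
      rw [map_add, map_nsmul, coeff_Dp, nsmul_eq_mul]
      push_cast
      ring
    rw [twistOp, coeff_iterate_of_coeff_eq_mul hshift, ih,
      Finset.prod_Icc_succ_top (Nat.le_add_left 1 d)]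
    ring

end DiagonalOperators

theorem Finset.prod_Icc_one_add {M : Type*} [CommMonoid M] (f : ℕ → M) (k d : ℕ) :
    ∏ m ∈ Finset.Icc 1 (k + d), f m
      = (∏ m ∈ Finset.Icc 1 k, f m) * ∏ m ∈ Finset.Icc 1 d, f (k + m) := by
  induction d with
  | zero => simp
  | succ d ih =>
    rw [← add_assoc, Finset.prod_Icc_succ_top (by omega), ih,
      Finset.prod_Icc_succ_top (by omega), mul_assoc, add_assoc]

section HyperplaneTwist

variable {A : Type*} [CommRing A]

noncomputable def hyperplaneTwist (p : A) (c : ℕ) : A⟦X⟧ →ₗ[A] A⟦X⟧ where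
  toFun F := mk fun n => (∏ m ∈ Finset.Icc 1 n, (p + m) ^ c) * coeff n F
  map_add' F G := by ext n; simp only [coeff_mk, map_add, mul_add]
  map_smul' a F := by ext n; simp only [coeff_mk, map_smul, smul_eq_mul, RingHom.id_apply]; ring

theorem coeff_hyperplaneTwist (p : A) (c : ℕ) (F : A⟦X⟧) (n : ℕ) :
    coeff n (hyperplaneTwist p c F) = (∏ m ∈ Finset.Icc 1 n, (p + m) ^ c) * coeff n F := by
  simp only [hyperplaneTwist, LinearMap.coe_mk, AddHom.coe_mk, coeff_mk]

theorem X_pow_mul_applyPoly_twistOp_hyperplaneTwist [Algebra ℚ A] (p : A) (c d : ℕ)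
    (P : Polynomial A) (F : A⟦X⟧) :
    X ^ d * applyPoly P (Dp p) (twistOp p c d (hyperplaneTwist p c F))
      = hyperplaneTwist p c (X ^ d * applyPoly P (Dp p) F) := by
  ext N
  rw [coeff_hyperplaneTwist, coeff_X_pow_mul', coeff_X_pow_mul']
  split_ifs with hdN
  · obtain ⟨k, rfl⟩ := Nat.exists_eq_add_of_le' hdN
    rw [Nat.add_sub_cancel, coeff_applyPoly_of_coeff_eq_mul (coeff_Dp p),
      coeff_applyPoly_of_coeff_eq_mul (coeff_Dp p), coeff_twistOp, coeff_hyperplaneTwist,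
      Finset.prod_Icc_one_add (fun m => (p + (m : A)) ^ c)]
    ring
  · rw [mul_zero]

end HyperplaneTwist

/-- The general hyperplane-twist principle for `rank A¹(E) = 1`: if the series
`Σ aₙ qⁿ` is annihilated by `Σ_{d=0}^{r} q^d P_d(D_p)`, then the twisted series
`Σ (∏_{m=1}^{n} (p+m)^c) aₙ qⁿ` is annihilated by
`Σ_{d=0}^{r} q^d P_d(D_p) ∏_{m=1}^{d} (D_p + m)^c`. -/
theorem hyperplane_twist_principle {A : Type*} [CommRing A] [Algebra ℚ A]
    (p : A) (c r : ℕ) (P : ℕ → Polynomial A) (a : ℕ → A)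
    (h : ∑ d ∈ Finset.range (r + 1),
      (X : A⟦X⟧) ^ d * applyPoly (P d) (Dp p) (PowerSeries.mk a) = 0) :
    ∑ d ∈ Finset.range (r + 1),
      (X : A⟦X⟧) ^ d * applyPoly (P d) (Dp p)
        (twistOp p c d
          (PowerSeries.mk fun n =>
            (∏ m ∈ Finset.Icc 1 n, (p + (m : A)) ^ c) * a n)) = 0 := by
  have htwist : (mk fun n => (∏ m ∈ Finset.Icc 1 n, (p + (m : A)) ^ c) * a n)
      = hyperplaneTwist p c (mk a) := by
    ext n
    rw [coeff_hyperplaneTwist, coeff_mk, coeff_mk]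
  simp only [htwist, X_pow_mul_applyPoly_twistOp_hyperplaneTwist, ← map_sum, h, map_zero]
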